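/- Halt property of unwrapping: for a closed well-formed term t of λ_int, t is normal for →_int if and only if ⌊t⌋ is normal for →_sou. -/

import Mathlib

set_option linter.unusedVariables false

namespace CC

/-- Terms of the source calculus λ_sou (de Bruijn indices, multi-binders). -/
inductive STm : Type
| var : Nat → STm
| lam : Nat → STm → STm
| app : STm → STm → STm
| proj : Nat → STm → STm
| tup : List STm → STm

instance : Inhabited STm := ⟨.var 0⟩

namespace STm

/-- Size of a source term. -/
def size : STm → Nat
| var _ => 1
| lam n t => t.size + n + 1
| app t u => t.size + u.size + 1
| proj _ t => t.size + 1
| tup ts => ts.length + (ts.attach.map (fun ⟨a, ha⟩ => a.size)).sum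
decreasing_by all_goals first
  | (have := List.sizeOf_lt_of_mem ha; omega)
  | decreasing_tactic

/-- Renaming of free de Bruijn indices. -/
def rename (ρ : Nat → Nat) : STm → STm
| var i => var (ρ i)
| lam n t => lam n (t.rename (fun i => if i < n then i else ρ (i - n) + n))
| app t u => app (t.rename ρ) (u.rename ρ)
| proj i t => proj i (t.rename ρ)
| tup ts => tup (ts.attach.map (fun ⟨a, ha⟩ => a.rename ρ))
decreasing_by all_goals first
  | (have := List.sizeOf_lt_of_mem ha; omega)
  | decreasing_tactic

/-- Parallel substitution. -/
def subst (σ : Nat → STm) : STm → STm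
| var i => σ i
| lam n t => lam n (t.subst (fun i => if i < n then var i else (σ (i - n)).rename (· + n)))
| app t u => app (t.subst σ) (u.subst σ)
| proj i t => proj i (t.subst σ)
| tup ts => tup (ts.attach.map (fun ⟨a, ha⟩ => a.subst σ))
decreasing_by all_goals first
  | (have := List.sizeOf_lt_of_mem ha; omega)
  | decreasing_tactic

/-- Simultaneous substitution of a list of terms for indices `0..vs.length-1`. -/
def substList (vs : List STm) (t : STm) : STm :=
  t.subst (fun i => if i < vs.length then vs.getD i default else var (i - vs.length))

end STm

/-- Values of λ_sou: (multi-variable) abstractions and tuples of values. -/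
inductive SVal : STm → Prop
| lam {n t} : SVal (.lam n t)
| tup {vs} : (∀ v ∈ vs, SVal v) → SVal (.tup vs)

/-- All free de Bruijn indices of `t` are `< k`. `FB 0 t` means `t` is closed. -/
inductive SFB : Nat → STm → Prop
| var {k i} : i < k → SFB k (.var i)
| lam {k n t} : SFB (k + n) t → SFB k (.lam n t)
| app {k t u} : SFB k t → SFB k u → SFB k (.app t u)
| proj {k i t} : SFB k t → SFB k (.proj i t)
| tup {k ts} : (∀ t ∈ ts, SFB k t) → SFB k (.tup ts)

/-- Labels for the two rewrite rules. -/
inductive Lab | beta | pi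
deriving DecidableEq

/-- Labelled weak right-to-left call-by-value reduction of λ_sou,
root rules closed under evaluation contexts. -/
inductive SStepL : Lab → STm → STm → Prop
| beta {n t vs} : (∀ v ∈ vs, SVal v) → vs.length = n →
    SStepL .beta (.app (.lam n t) (.tup vs)) (STm.substList vs t)
| proj {i vs} : (∀ v ∈ vs, SVal v) → i < vs.length →
    SStepL .pi (.proj i (.tup vs)) (vs.getD i default)
| appR {l t u u'} : SStepL l u u' → SStepL l (.app t u) (.app t u')
| appL {l v t t'} : SVal v → SStepL l t t' → SStepL l (.app t v) (.app t' v)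
| projC {l i t t'} : SStepL l t t' → SStepL l (.proj i t) (.proj i t')
| tupC {l ts t t' vs} : (∀ v ∈ vs, SVal v) → SStepL l t t' →
    SStepL l (.tup (ts ++ t :: vs)) (.tup (ts ++ t' :: vs))

/-- The reduction →_sou. -/
def SStep (t u : STm) : Prop := ∃ l, SStepL l t u

/-- Clashes of λ_sou: root clashes closed under evaluation contexts. -/
inductive SClash : STm → Prop
| rproj {i v} : SVal v → (∀ vs, v = .tup vs → vs.length ≤ i) → SClash (.proj i v)
| rapp {n t v} : SVal v → (∀ vs, v = .tup vs → vs.length ≠ n) → SClash (.app (.lam n t) v)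
| rtup {rs s} : SClash (.app (.tup rs) s)
| cAppR {t u} : SClash u → SClash (.app t u)
| cAppL {t v} : SVal v → SClash t → SClash (.app t v)
| cProj {i t} : SClash t → SClash (.proj i t)
| cTup {ts t vs} : (∀ v ∈ vs, SVal v) → SClash t → SClash (.tup (ts ++ t :: vs))

/-- Clash-freeness (coinductively: no reduct is a clash). -/
def SClashFree (t : STm) : Prop := ∀ u, Relation.ReflTransGen SStep t u → ¬ SClash u

/-- `k`-fold iteration of a reduction. -/
def iterRel {α : Type _} (R : α → α → Prop) : Nat → α → α → Prop
| 0, t, u => t = u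
| (k+1), t, u => ∃ s, R t s ∧ iterRel R k s u

end CC

namespace CC

/-- Terms of the intermediate calculus λ_int: abstractions are replaced by
closures `clo n m body bag` binding `n` wrapped variables ȳ (indices `m..m+n-1`
of the body) and `m` source variables x̄ (indices `0..m-1` of the body),
with a bag of `n` terms. -/
inductive ITm : Type
| var : Nat → ITm
| app : ITm → ITm → ITm
| proj : Nat → ITm → ITm
| tup : List ITm → ITm
| clo : Nat → Nat → ITm → List ITm → ITm

instance : Inhabited ITm := ⟨.var 0⟩

namespace ITm

/-- Renaming of free variables of a λ_int term: closure bodies are untouched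
(there are no free variables in the body other than the closure's own binders). -/
def irename (ρ : Nat → Nat) : ITm → ITm
| var i => var (ρ i)
| app t u => app (t.irename ρ) (u.irename ρ)
| proj i t => proj i (t.irename ρ)
| tup ts => tup (ts.attach.map (fun ⟨a, ha⟩ => a.irename ρ))
| clo n m body bag => clo n m body (bag.attach.map (fun ⟨a, ha⟩ => a.irename ρ))
decreasing_by all_goals first
  | (have := List.sizeOf_lt_of_mem ha; omega)
  | decreasing_tactic

/-- Simultaneous substitution of the terms `vs` for the free variables
`0..vs.length-1` of a λ_int term (shifting the remaining ones down);
it goes into bags but leaves closure bodies untouched. -/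
def isubst (vs : List ITm) : ITm → ITm
| var i => if i < vs.length then vs.getD i default else var (i - vs.length)
| app t u => app (t.isubst vs) (u.isubst vs)
| proj i t => proj i (t.isubst vs)
| tup ts => tup (ts.attach.map (fun ⟨a, ha⟩ => a.isubst vs))
| clo n m body bag => clo n m body (bag.attach.map (fun ⟨a, ha⟩ => a.isubst vs))
decreasing_by all_goals first
  | (have := List.sizeOf_lt_of_mem ha; omega)
  | decreasing_tactic

/-- Size of a λ_int term (counting bags and binder sequences). -/
def isize : ITm → Nat
| var _ => 1
| app t u => t.isize + u.isize + 1
| proj _ t => t.isize + 1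
| tup ts => ts.length + (ts.attach.map (fun ⟨a, ha⟩ => a.isize)).sum
| clo n m body bag =>
    body.isize + n + m + 1 + bag.length + (bag.attach.map (fun ⟨a, ha⟩ => a.isize)).sum
decreasing_by all_goals first
  | (have := List.sizeOf_lt_of_mem ha; omega)
  | decreasing_tactic

end ITm

/-- Values of λ_int: closures (with a variable bag or with an evaluated bag)
and tuples of values. -/
inductive IVal : ITm → Prop
| cloV {n m t bag} : (∀ b ∈ bag, ∃ i, b = ITm.var i) → IVal (.clo n m t bag)
| cloE {n m t bag} : (∀ b ∈ bag, IVal b) → IVal (.clo n m t bag)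
| tup {vs} : (∀ v ∈ vs, IVal v) → IVal (.tup vs)

/-- All free variables of a λ_int term are `< k` (`IFB 0 t`: `t` is closed). -/
inductive IFB : Nat → ITm → Prop
| var {k i} : i < k → IFB k (.var i)
| app {k t u} : IFB k t → IFB k u → IFB k (.app t u)
| proj {k i t} : IFB k t → IFB k (.proj i t)
| tup {k ts} : (∀ t ∈ ts, IFB k t) → IFB k (.tup ts)
| clo {k n m body bag} : (∀ b ∈ bag, IFB k b) → IFB (n + m + k) body →
    IFB k (.clo n m body bag)

/-- Well-formed λ_int terms: every closure `clo n m body bag` satisfies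
`|bag| = n`, its body is closed by the binders (fv(body) ⊆ ȳ ∪ x̄), and the bag
is either a bag of variables or a bag of values. -/
inductive IWF : ITm → Prop
| var {i} : IWF (.var i)
| app {t u} : IWF t → IWF u → IWF (.app t u)
| proj {i t} : IWF t → IWF (.proj i t)
| tup {ts} : (∀ t ∈ ts, IWF t) → IWF (.tup ts)
| cloV {n m body bag} : bag.length = n → IFB (n + m) body →
    (∀ b ∈ bag, ∃ i, b = ITm.var i) → IWF body → IWF (.clo n m body bag)
| cloE {n m body bag} : bag.length = n → IFB (n + m) body →
    (∀ b ∈ bag, IVal b) → (∀ b ∈ bag, IWF b) → IWF body → IWF (.clo n m body bag)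

/-- Prime λ_int terms: all closures are variable closures. -/
inductive IPrime : ITm → Prop
| var {i} : IPrime (.var i)
| app {t u} : IPrime t → IPrime u → IPrime (.app t u)
| proj {i t} : IPrime t → IPrime (.proj i t)
| tup {ts} : (∀ t ∈ ts, IPrime t) → IPrime (.tup ts)
| clo {n m body bag} : (∀ b ∈ bag, ∃ i, b = ITm.var i) → IPrime body →
    IPrime (.clo n m body bag)

/-- Labelled reduction of λ_int: the root rules `iβv` (the closure's bag is
substituted for ȳ and the argument tuple for x̄, simultaneously) and `iπ`,
closed under evaluation contexts (which do not enter closures). -/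
inductive IStepL : Lab → ITm → ITm → Prop
| beta {n m body bag vs} : (∀ b ∈ bag, IVal b) → (∀ v ∈ vs, IVal v) →
    bag.length = n → vs.length = m →
    IStepL .beta (.app (.clo n m body bag) (.tup vs)) (ITm.isubst (vs ++ bag) body)
| proj {i vs} : (∀ v ∈ vs, IVal v) → i < vs.length →
    IStepL .pi (.proj i (.tup vs)) (vs.getD i default)
| appR {l t u u'} : IStepL l u u' → IStepL l (.app t u) (.app t u')
| appL {l v t t'} : IVal v → IStepL l t t' → IStepL l (.app t v) (.app t' v)
| projC {l i t t'} : IStepL l t t' → IStepL l (.proj i t) (.proj i t')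
| tupC {l ts t t' vs} : (∀ v ∈ vs, IVal v) → IStepL l t t' →
    IStepL l (.tup (ts ++ t :: vs)) (.tup (ts ++ t' :: vs))

/-- The reduction →_int. -/
def IStep (t u : ITm) : Prop := ∃ l, IStepL l t u

/-- Clashes of λ_int: root clashes closed under evaluation contexts. -/
inductive IClash : ITm → Prop
| rproj {i v} : IVal v → (∀ vs, v = .tup vs → vs.length ≤ i) → IClash (.proj i v)
| rapp {n m body bag v} : IVal v → (∀ vs, v = .tup vs → vs.length ≠ m) →
    IClash (.app (.clo n m body bag) v)
| rtup {rs s} : IClash (.app (.tup rs) s)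
| cAppR {t u} : IClash u → IClash (.app t u)
| cAppL {t v} : IVal v → IClash t → IClash (.app t v)
| cProj {i t} : IClash t → IClash (.proj i t)
| cTup {ts t vs} : (∀ v ∈ vs, IVal v) → IClash t → IClash (.tup (ts ++ t :: vs))

/-- Clash-freeness for λ_int. -/
def IClashFree (t : ITm) : Prop := ∀ u, Relation.ReflTransGen IStep t u → ¬ IClash u

/-- The wrapping translation ⌈·⌉ : λ_sou → λ_int: every abstraction `λx̄.t` with
free variables ȳ becomes the variable closure `[λȳ.λx̄.⌈t⌉, ⟨ȳ⟩]`; homomorphic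
on the other constructors. -/
def STm.fvs : STm → Finset Nat
| .var i => {i}
| .lam n t => (t.fvs.filter (· ≥ n)).image (· - n)
| .app t u => t.fvs ∪ u.fvs
| .proj _ t => t.fvs
| .tup ts => ts.attach.foldr (fun ⟨a, ha⟩ acc => a.fvs ∪ acc) ∅
decreasing_by all_goals first
  | (have := List.sizeOf_lt_of_mem ha; omega)
  | decreasing_tactic

def STm.wrap : STm → ITm
| .var i => .var i
| .app t u => .app t.wrap u.wrap
| .proj i t => .proj i t.wrap
| .tup ts => .tup (ts.attach.map (fun ⟨a, ha⟩ => a.wrap))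
| .lam n t =>
    let ys : List Nat := (((t.fvs.filter (· ≥ n)).image (· - n)).sort (· ≤ ·))
    .clo ys.length n
      (t.wrap.irename (fun j => if j < n then j else n + (ys.idxOf (j - n))))
      (ys.map (fun j => ITm.var j))
decreasing_by all_goals first
  | (have := List.sizeOf_lt_of_mem ha; omega)
  | decreasing_tactic

/-- The unwrapping translation ⌊·⌋ : λ_int → λ_sou: substitutes the (unwrapped)
bag of each closure for its wrapped variables ȳ; on a variable closure with
bag ⟨ȳ⟩ this gives `λx̄.⌊body⌋` with the ȳ free. -/
def ITm.unwrap : ITm → STm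
| .var i => .var i
| .app t u => .app t.unwrap u.unwrap
| .proj i t => .proj i t.unwrap
| .tup ts => .tup (ts.attach.map (fun ⟨a, ha⟩ => a.unwrap))
| .clo n m body bag =>
    let ub : List STm := bag.attach.map (fun ⟨a, ha⟩ => a.unwrap)
    .lam m (body.unwrap.subst (fun i =>
      if i < m then .var i
      else if i < m + n then (ub.getD (i - m) default).rename (· + m)
      else .var (i - n)))
decreasing_by all_goals first
  | (have := List.sizeOf_lt_of_mem ha; omega)
  | decreasing_tactic

end CC

namespace CC

lemma unwrap_var (i : Nat) : (ITm.var i).unwrap = .var i := by rw [ITm.unwrap]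

lemma unwrap_app (t u : ITm) : (ITm.app t u).unwrap = .app t.unwrap u.unwrap := by
  rw [ITm.unwrap]

lemma unwrap_proj (i : Nat) (t : ITm) : (ITm.proj i t).unwrap = .proj i t.unwrap := by
  rw [ITm.unwrap]

lemma unwrap_tup (ts : List ITm) : (ITm.tup ts).unwrap = .tup (ts.map ITm.unwrap) := by
  rw [ITm.unwrap]
  congr 1
  simp [List.attach_map_val]

lemma unwrap_clo_shape (n m : Nat) (body : ITm) (bag : List ITm) :
    ∃ s, (ITm.clo n m body bag).unwrap = STm.lam m s := by
  rw [ITm.unwrap]; exact ⟨_, rfl⟩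

lemma isize_lt_tup {a : ITm} {ts : List ITm} (h : a ∈ ts) :
    a.isize < (ITm.tup ts).isize := by
  rw [ITm.isize]
  have h1 : (ts.attach.map (fun ⟨a, ha⟩ => a.isize)).sum = (ts.map ITm.isize).sum := by
    simp [List.attach_map_val]
  have h2 : a.isize ∈ ts.map ITm.isize := List.mem_map_of_mem h
  have h3 : a.isize ≤ (ts.map ITm.isize).sum :=
    List.single_le_sum (fun x _ => Nat.zero_le x) _ h2
  have h4 : 0 < ts.length := List.length_pos_of_mem h
  omega

lemma ival_sval : ∀ (w : ITm), IVal w → SVal w.unwrap := by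
  have key : ∀ (k : Nat) (w : ITm), w.isize < k → IVal w → SVal w.unwrap := by
    intro k
    induction k with
    | zero => intro w hs; omega
    | succ k ih =>
      intro w hs hv
      cases hv with
      | @cloV n m t bag h =>
        obtain ⟨s, hsh⟩ := unwrap_clo_shape n m t bag
        rw [hsh]; exact SVal.lam
      | @cloE n m t bag h =>
        obtain ⟨s, hsh⟩ := unwrap_clo_shape n m t bag
        rw [hsh]; exact SVal.lam
      | @tup vs hvs =>
        rw [unwrap_tup]
        refine SVal.tup ?_
        intro v hvv
        rcases List.mem_map.mp hvv with ⟨w', hw', rfl⟩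
        exact ih w' (by have := isize_lt_tup hw'; omega) (hvs w' hw')
  intro w hv; exact key (w.isize + 1) w (by omega) hv

lemma sval_ival : ∀ (w : ITm), IFB 0 w → IWF w → SVal w.unwrap → IVal w := by
  have key : ∀ (k : Nat) (w : ITm), w.isize < k → IFB 0 w → IWF w → SVal w.unwrap → IVal w := by
    intro k
    induction k with
    | zero => intro w hs; omega
    | succ k ih =>
      intro w hs hc hwf hv
      cases w with
      | var i => rw [unwrap_var] at hv; cases hv
      | app a b => rw [unwrap_app] at hv; cases hv
      | proj i a => rw [unwrap_proj] at hv; cases hv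
      | tup ws =>
        rw [unwrap_tup] at hv
        cases hv with
        | tup hvs =>
          refine IVal.tup ?_
          intro v hvv
          cases hc with
          | tup hcs =>
            cases hwf with
            | tup hwfs =>
              exact ih v (by have := isize_lt_tup hvv; omega) (hcs v hvv) (hwfs v hvv)
                (hvs _ (List.mem_map_of_mem hvv))
      | clo n m body bag =>
        cases hwf with
        | cloV _ _ hb _ => exact IVal.cloV hb
        | cloE _ _ hb _ _ => exact IVal.cloE hb
  intro w hc hwf hv; exact key (w.isize + 1) w (by omega) hc hwf hv

lemma ifb0_bag_ival {n m : Nat} {body : ITm} {bag : List ITm}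
    (hc : IFB 0 (ITm.clo n m body bag)) (hwf : IWF (ITm.clo n m body bag)) :
    (∀ b ∈ bag, IVal b) ∧ bag.length = n := by
  cases hc with
  | clo hbc _ =>
    cases hwf with
    | cloV hlen _ hvars _ =>
      refine ⟨?_, hlen⟩
      intro b hb
      have hfb := hbc b hb
      rcases hvars b hb with ⟨i, rfl⟩
      cases hfb with
      | var hi => omega
    | cloE hlen _ hvals _ _ => exact ⟨hvals, hlen⟩

lemma step_fwd : ∀ {l : Lab} {t u : ITm}, IStepL l t u → ∃ u', SStep t.unwrap u' := by
  intro l t u h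
  induction h with
  | @beta n m body bag vs hbag hvs hbl hvl =>
    obtain ⟨s, hs⟩ := unwrap_clo_shape n m body bag
    have hv' : ∀ v ∈ vs.map ITm.unwrap, SVal v := by
      intro v hv
      rcases List.mem_map.mp hv with ⟨w, hw, rfl⟩
      exact ival_sval w (hvs w hw)
    have hstep := SStepL.beta (t := s) hv' (by simp [hvl] : (vs.map ITm.unwrap).length = m)
    rw [unwrap_app, hs, unwrap_tup]
    exact ⟨_, .beta, hstep⟩
  | @proj i vs hvs hi =>
    have hv' : ∀ v ∈ vs.map ITm.unwrap, SVal v := by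
      intro v hv
      rcases List.mem_map.mp hv with ⟨w, hw, rfl⟩
      exact ival_sval w (hvs w hw)
    have hstep := SStepL.proj (i := i) hv' (by simpa using hi)
    rw [unwrap_proj, unwrap_tup]
    exact ⟨_, .pi, hstep⟩
  | @appR l t u u' _ ih =>
    rcases ih with ⟨u'', l', h'⟩
    exact ⟨_, l', by rw [unwrap_app]; exact SStepL.appR h'⟩
  | @appL l v t t' hv _ ih =>
    rcases ih with ⟨u'', l', h'⟩
    exact ⟨_, l', by rw [unwrap_app]; exact SStepL.appL (ival_sval v hv) h'⟩
  | @projC l i t t' _ ih =>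
    rcases ih with ⟨u'', l', h'⟩
    exact ⟨_, l', by rw [unwrap_proj]; exact SStepL.projC h'⟩
  | @tupC l ts t t' vs hvs _ ih =>
    rcases ih with ⟨u'', l', h'⟩
    have hv' : ∀ v ∈ vs.map ITm.unwrap, SVal v := by
      intro v hv
      rcases List.mem_map.mp hv with ⟨w, hw, rfl⟩
      exact ival_sval w (hvs w hw)
    have hstep := SStepL.tupC (ts := ts.map ITm.unwrap) hv' h'
    rw [unwrap_tup, List.map_append, List.map_cons]
    exact ⟨_, l', hstep⟩

lemma map_split {α β : Type _} (f : α → β) :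
    ∀ (ts : List β) (ws : List α) (x : β) (vs : List β),
    ws.map f = ts ++ x :: vs →
    ∃ ws1 w ws2, ws = ws1 ++ w :: ws2 ∧ ws1.map f = ts ∧ f w = x ∧ ws2.map f = vs := by
  intro ts
  induction ts with
  | nil =>
    intro ws x vs h
    cases ws with
    | nil => simp at h
    | cons w ws' =>
      simp only [List.map_cons, List.nil_append, List.cons.injEq] at h
      exact ⟨[], w, ws', by simp, rfl, h.1, h.2⟩
  | cons t ts' ih =>
    intro ws x vs h
    cases ws with
    | nil => simp at h
    | cons w ws' =>
      simp only [List.map_cons, List.cons_append, List.cons.injEq] at h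
      rcases ih ws' x vs h.2 with ⟨ws1, w', ws2, rfl, h1, h2, h3⟩
      exact ⟨w :: ws1, w', ws2, by simp, by simp [h.1, h1], h2, h3⟩

lemma step_back : ∀ {l : Lab} {s u' : STm}, SStepL l s u' →
    ∀ t : ITm, t.unwrap = s → IFB 0 t → IWF t → ∃ u, IStep t u := by
  intro l s u' h
  induction h with
  | @beta n b vs hvs hlen =>
    intro t ht hc hwf
    cases t with
    | var i => rw [unwrap_var] at ht; cases ht
    | proj i a => rw [unwrap_proj] at ht; cases ht
    | tup ws => rw [unwrap_tup] at ht; cases ht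
    | clo n' m body bag =>
      obtain ⟨s1, hs1⟩ := unwrap_clo_shape n' m body bag
      rw [hs1] at ht; cases ht
    | app t1 t2 =>
      rw [unwrap_app] at ht
      injection ht with h1 h2
      cases t1 with
      | var i => rw [unwrap_var] at h1; cases h1
      | app a b => rw [unwrap_app] at h1; cases h1
      | proj i a => rw [unwrap_proj] at h1; cases h1
      | tup ws => rw [unwrap_tup] at h1; cases h1
      | clo n' m body bag =>
        obtain ⟨s1, hs1⟩ := unwrap_clo_shape n' m body bag
        rw [hs1] at h1
        injection h1 with hm _
        cases t2 with
        | var i => rw [unwrap_var] at h2; cases h2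
        | app a b' => rw [unwrap_app] at h2; cases h2
        | proj i a => rw [unwrap_proj] at h2; cases h2
        | clo n2 m2 b2 bg2 =>
          obtain ⟨s2, hs2⟩ := unwrap_clo_shape n2 m2 b2 bg2
          rw [hs2] at h2; cases h2
        | tup ws =>
          rw [unwrap_tup] at h2
          injection h2 with hws
          cases hc with
          | app hc1 hc2 =>
            cases hwf with
            | app hw1 hw2 =>
              obtain ⟨hbagval, hbaglen⟩ := ifb0_bag_ival hc1 hw1
              have hwsval : ∀ w ∈ ws, IVal w := by
                intro w hw
                have hm1 : IFB 0 w := by cases hc2 with | tup h => exact h w hw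
                have hm2 : IWF w := by cases hw2 with | tup h => exact h w hw
                exact sval_ival w hm1 hm2 (hvs _ (by rw [← hws]; exact List.mem_map_of_mem hw))
              have hwslen : ws.length = m := by
                have := congrArg List.length hws
                simp at this
                omega
              exact ⟨_, .beta, IStepL.beta hbagval hwsval hbaglen hwslen⟩
  | @proj i vs hvs hi =>
    intro t ht hc hwf
    cases t with
    | var j => rw [unwrap_var] at ht; cases ht
    | app a b => rw [unwrap_app] at ht; cases ht
    | tup ws => rw [unwrap_tup] at ht; cases ht
    | clo n' m body bag =>
      obtain ⟨s1, hs1⟩ := unwrap_clo_shape n' m body bag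
      rw [hs1] at ht; cases ht
    | proj j t' =>
      rw [unwrap_proj] at ht
      injection ht with hj h2
      cases t' with
      | var i2 => rw [unwrap_var] at h2; cases h2
      | app a b => rw [unwrap_app] at h2; cases h2
      | proj i2 a => rw [unwrap_proj] at h2; cases h2
      | clo n2 m2 b2 bg2 =>
        obtain ⟨s2, hs2⟩ := unwrap_clo_shape n2 m2 b2 bg2
        rw [hs2] at h2; cases h2
      | tup ws =>
        rw [unwrap_tup] at h2
        injection h2 with hws
        have hwsval : ∀ w ∈ ws, IVal w := by
          intro w hw
          have hm1 : IFB 0 w := by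
            cases hc with | proj hc' => cases hc' with | tup h => exact h w hw
          have hm2 : IWF w := by
            cases hwf with | proj hw' => cases hw' with | tup h => exact h w hw
          exact sval_ival w hm1 hm2 (hvs _ (by rw [← hws]; exact List.mem_map_of_mem hw))
        have hwslen : i < ws.length := by
          have := congrArg List.length hws
          simp at this
          omega
        subst hj
        exact ⟨_, .pi, IStepL.proj hwsval hwslen⟩
  | @appR l a b b' _ ih =>
    intro t ht hc hwf
    cases t with
    | var i => rw [unwrap_var] at ht; cases ht
    | proj i a' => rw [unwrap_proj] at ht; cases ht
    | tup ws => rw [unwrap_tup] at ht; cases ht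
    | clo n' m body bag =>
      obtain ⟨s1, hs1⟩ := unwrap_clo_shape n' m body bag
      rw [hs1] at ht; cases ht
    | app t1 t2 =>
      rw [unwrap_app] at ht
      injection ht with h1 h2
      have hc2 : IFB 0 t2 := by cases hc with | app _ h => exact h
      have hw2 : IWF t2 := by cases hwf with | app _ h => exact h
      rcases ih t2 h2 hc2 hw2 with ⟨u, l', h'⟩
      exact ⟨_, l', IStepL.appR h'⟩
  | @appL l v a a' hv _ ih =>
    intro t ht hc hwf
    cases t with
    | var i => rw [unwrap_var] at ht; cases ht
    | proj i a' => rw [unwrap_proj] at ht; cases ht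
    | tup ws => rw [unwrap_tup] at ht; cases ht
    | clo n' m body bag =>
      obtain ⟨s1, hs1⟩ := unwrap_clo_shape n' m body bag
      rw [hs1] at ht; cases ht
    | app t1 t2 =>
      rw [unwrap_app] at ht
      injection ht with h1 h2
      have hc1 : IFB 0 t1 := by cases hc with | app h _ => exact h
      have hw1 : IWF t1 := by cases hwf with | app h _ => exact h
      have hc2 : IFB 0 t2 := by cases hc with | app _ h => exact h
      have hw2 : IWF t2 := by cases hwf with | app _ h => exact h
      have hv2 : IVal t2 := sval_ival t2 hc2 hw2 (h2 ▸ hv)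
      rcases ih t1 h1 hc1 hw1 with ⟨u, l', h'⟩
      exact ⟨_, l', IStepL.appL hv2 h'⟩
  | @projC l i a a' _ ih =>
    intro t ht hc hwf
    cases t with
    | var j => rw [unwrap_var] at ht; cases ht
    | app a' b => rw [unwrap_app] at ht; cases ht
    | tup ws => rw [unwrap_tup] at ht; cases ht
    | clo n' m body bag =>
      obtain ⟨s1, hs1⟩ := unwrap_clo_shape n' m body bag
      rw [hs1] at ht; cases ht
    | proj j t' =>
      rw [unwrap_proj] at ht
      injection ht with hj h2
      have hc' : IFB 0 t' := by cases hc with | proj h => exact h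
      have hw' : IWF t' := by cases hwf with | proj h => exact h
      rcases ih t' h2 hc' hw' with ⟨u, l', h'⟩
      exact ⟨_, l', IStepL.projC h'⟩
  | @tupC l ts x x' vs hvs _ ih =>
    intro t ht hc hwf
    cases t with
    | var j => rw [unwrap_var] at ht; cases ht
    | app a' b => rw [unwrap_app] at ht; cases ht
    | proj j a => rw [unwrap_proj] at ht; cases ht
    | clo n' m body bag =>
      obtain ⟨s1, hs1⟩ := unwrap_clo_shape n' m body bag
      rw [hs1] at ht; cases ht
    | tup ws =>
      rw [unwrap_tup] at ht
      injection ht with hws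
      rcases map_split ITm.unwrap ts ws x vs hws with ⟨ws1, w, ws2, rfl, hmap1, hmapw, hmap2⟩
      have hcw : IFB 0 w := by
        cases hc with | tup h => exact h w (by simp)
      have hww : IWF w := by
        cases hwf with | tup h => exact h w (by simp)
      have hvals : ∀ v ∈ ws2, IVal v := by
        intro v hv
        have hm1 : IFB 0 v := by cases hc with | tup h => exact h v (by simp [hv])
        have hm2 : IWF v := by cases hwf with | tup h => exact h v (by simp [hv])
        exact sval_ival v hm1 hm2 (hvs _ (by rw [← hmap2]; exact List.mem_map_of_mem hv))
      rcases ih w hmapw hcw hww with ⟨u, l', h'⟩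
      exact ⟨_, l', IStepL.tupC hvals h'⟩

/-- Halt property of unwrapping: for closed well-formed `t` in λ_int, `t` is
→_int-normal iff `⌊t⌋` is →_sou-normal. -/
theorem unwrap_halt (t : ITm) (hc : IFB 0 t) (hwf : IWF t) :
    (¬ ∃ u, IStep t u) ↔ (¬ ∃ u, SStep t.unwrap u) := by
  constructor
  · intro hn ⟨u', l', h'⟩
    rcases step_back h' t rfl hc hwf with ⟨u, hu⟩
    exact hn ⟨u, hu⟩
  · intro hn ⟨u, l, h⟩
    rcases step_fwd h with ⟨u', h'⟩
    exact hn ⟨u', h'⟩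

end CC
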